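/- Let S = ℂ[x, y_1,…,y_p], let a ≥ 1, let H be a nonzero homogeneous polynomial of degree d − a in the y-variables only, and let K be a homogeneous polynomial of degree d in the y-variables only. If F = x^a·H + K is nonzero, then the Waring rank satisfies r(F) ≥ al(H). -/

import Mathlib

open MvPolynomial

/-- The iterated partial derivative `∂^m` applied to `F`: on a monomial `x^k` it gives
`(∏ᵢ kᵢ(kᵢ-1)⋯(kᵢ-mᵢ+1)) · x^(k-m)`, i.e. each dual variable `αᵢ` acts as `∂/∂xᵢ`. -/
noncomputable def mderiv {σ : Type*} (m : σ →₀ ℕ) (F : MvPolynomial σ ℂ) :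
    MvPolynomial σ ℂ :=
  (AddMonoidAlgebra.coeff F).sum fun k c =>
    MvPolynomial.monomial (k - m) (c * ∏ i ∈ m.support, (Nat.descFactorial (k i) (m i) : ℂ))

/-- The apolarity action `Θ ∘ F` of a polynomial `Θ` in the dual variables on `F`,
as a constant-coefficient differential operator. -/
noncomputable def diffOp {σ : Type*} (Θ F : MvPolynomial σ ℂ) : MvPolynomial σ ℂ :=
  (AddMonoidAlgebra.coeff Θ).sum fun m c => c • mderiv m F

/-- Apolar length `al F`: the dimension of the space `Diff(F) = {Θ ∘ F : Θ ∈ T}` of all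
partial derivatives of `F` of all orders (including `F` itself). -/
noncomputable def apolarLength {σ : Type*} (F : MvPolynomial σ ℂ) : ℕ :=
  Module.finrank ℂ (Submodule.span ℂ (Set.range fun Θ => diffOp Θ F))

/-- The Hilbert function of the apolar algebra of `F`: the dimension of the span of the
`i`-th order partial derivatives `{Θ ∘ F : Θ homogeneous of degree i}`. -/
noncomputable def hilbFn {σ : Type*} (F : MvPolynomial σ ℂ) (i : ℕ) : ℕ :=
  Module.finrank ℂ (Submodule.span ℂ
    {G : MvPolynomial σ ℂ | ∃ Θ : MvPolynomial σ ℂ, Θ.IsHomogeneous i ∧ diffOp Θ F = G})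

/-- Waring rank of a degree-`d` form: the least `r` such that
`F = c₁ ℓ₁^d + ⋯ + c_r ℓ_r^d` for linear forms `ℓᵢ` and scalars `cᵢ ∈ ℂ`. -/
noncomputable def waringRank {σ : Type*} [Fintype σ] (d : ℕ) (F : MvPolynomial σ ℂ) : ℕ :=
  sInf {r : ℕ | ∃ (c : Fin r → ℂ) (v : Fin r → σ → ℂ),
    F = ∑ i, c i • (∑ j, v i j • MvPolynomial.X j) ^ d}

/-!
Write `F = ∑ᵢ cᵢ ℓᵢ^d` with `ℓᵢ = ∑ⱼ vᵢⱼ xⱼ`. After rescaling, every `ℓᵢ` either has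
`x`-coefficient `1` or does not involve `x`, and the latter terms can be moved into `K`.
For an operator `Ψ` of degree `k ≤ d - a`, applying `∂ₓ^a Ψ` to both expressions of `F` gives
`a! · Ψ ∘ H = d(d-1)⋯(d-a-k+1) · ∑ᵢ cᵢ Ψ(vᵢ) ℓᵢ^(d-a-k)`,
so the `k`-th derivatives of `H` lie in the image of `E_k = {(cᵢ Ψ(vᵢ))ᵢ : deg Ψ = k} ⊆ ℂ^r`
under `u ↦ ∑ᵢ uᵢ ℓᵢ^(d-a-k)`. Since every `vᵢ` has `x`-coordinate `1`, multiplying `Ψ` by `∂ₓ`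
does not change its vector, so `E_0 ⊆ E_1 ⊆ ⋯ ⊆ ℂ^r`; and `∂ₓ^(a+1)` kills `F`, so the map
of order `k + 1` kills `E_k`. The dimensions of the images therefore telescope to at most
`dim E_(d-a) ≤ r`.
-/

open Module

section Calculus

variable {σ : Type*}

theorem MvPolynomial.IsHomogeneous.degree_eq_of_mem_support {R : Type*} [CommSemiring R]
    {φ : MvPolynomial σ R} {n : ℕ} (hφ : φ.IsHomogeneous n) {m : σ →₀ ℕ} (hm : m ∈ φ.support) :
    m.degree = n :=
  (hφ.degree_eq_sum_deg_support hm).symm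

theorem coeff_mderiv (m : σ →₀ ℕ) (F : MvPolynomial σ ℂ) (n : σ →₀ ℕ) :
    coeff n (mderiv m F) =
      (∏ i ∈ m.support, (((n + m) i).descFactorial (m i) : ℂ)) * coeff (n + m) F := by
  classical
  rw [mderiv, MvPolynomial.sum_def, coeff_sum, Finset.sum_eq_single (n + m)]
  · rw [coeff_monomial, add_tsub_cancel_right, if_pos rfl, mul_comm]
  · intro k _ hk
    rw [coeff_monomial]
    split_ifs with hkm
    · -- `k - m = n` with `k ≠ n + m` forces `k i < m i` somewhere, where the factor vanishes
      obtain ⟨i, hi⟩ : ∃ i, k i < m i := by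
        by_contra! hc
        exact hk (Finsupp.ext fun i => by
          have := DFunLike.congr_fun hkm i
          simp only [Finsupp.tsub_apply, Finsupp.add_apply] at this ⊢
          have := hc i
          omega)
      refine mul_eq_zero_of_right _
        (Finset.prod_eq_zero (i := i) (Finsupp.mem_support_iff.mpr (by omega)) ?_)
      rw [Nat.descFactorial_eq_zero_iff_lt.mpr hi, Nat.cast_zero]
    · rfl
  · intro h
    rw [MvPolynomial.notMem_support_iff.mp h, zero_mul, map_zero, coeff_zero]

theorem mderiv_add (m : σ →₀ ℕ) (F G : MvPolynomial σ ℂ) :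
    mderiv m (F + G) = mderiv m F + mderiv m G := by
  ext n; simp [coeff_mderiv, mul_add]

theorem mderiv_smul (m : σ →₀ ℕ) (t : ℂ) (F : MvPolynomial σ ℂ) :
    mderiv m (t • F) = t • mderiv m F := by
  ext n; simp [coeff_mderiv]; ring

theorem mderiv_zero_right (m : σ →₀ ℕ) : mderiv m (0 : MvPolynomial σ ℂ) = 0 := by
  ext n; simp [coeff_mderiv]

theorem mderiv_zero_left (F : MvPolynomial σ ℂ) : mderiv 0 F = F := by
  ext n; simp [coeff_mderiv]

theorem mderiv_monomial (m k : σ →₀ ℕ) (c : ℂ) :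
    mderiv m (monomial k c) =
      monomial (k - m) (c * ∏ i ∈ m.support, ((k i).descFactorial (m i) : ℂ)) := by
  rw [mderiv, MvPolynomial.sum_monomial_eq (by rw [zero_mul, map_zero])]

theorem mderiv_mderiv (m m' : σ →₀ ℕ) (F : MvPolynomial σ ℂ) :
    mderiv m (mderiv m' F) = mderiv (m + m') F := by
  classical
  ext n
  simp only [coeff_mderiv, ← mul_assoc, ← add_assoc]
  congr 1
  -- the factors are `1` off the supports, so all products can run over `m.support ∪ m'.support`
  have extend : ∀ (u : σ →₀ ℕ) (N : σ → ℕ), u.support ⊆ m.support ∪ m'.support →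
      ∏ i ∈ u.support, ((N i).descFactorial (u i) : ℂ) =
        ∏ i ∈ m.support ∪ m'.support, ((N i).descFactorial (u i) : ℂ) := fun u N hu =>
    Finset.prod_subset hu fun i _ hi => by simp [Finsupp.notMem_support_iff.mp hi]
  rw [extend m _ Finset.subset_union_left, extend m' _ Finset.subset_union_right,
    extend (m + m') _ Finsupp.support_add, ← Finset.prod_mul_distrib]
  refine Finset.prod_congr rfl fun i _ => ?_
  simp only [Finsupp.add_apply]
  rw [← Nat.cast_mul, ← Nat.descFactorial_mul_descFactorial (Nat.le_add_left (m' i) (m i)),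
    Nat.add_sub_cancel, Nat.add_sub_cancel]

theorem mderiv_single_one (j : σ) (F : MvPolynomial σ ℂ) :
    mderiv (Finsupp.single j 1) F = pderiv j F := by
  induction F using MvPolynomial.induction_on' with
  | monomial k c =>
    rw [mderiv_monomial, pderiv_monomial, Finsupp.support_single j one_ne_zero,
      Finset.prod_singleton, Finsupp.single_eq_same, Nat.descFactorial_one]
  | add p q hp hq => rw [mderiv_add, map_add, hp, hq]

theorem mderiv_eq_zero_of_pderiv_eq_zero {m : σ →₀ ℕ} {F : MvPolynomial σ ℂ} {j : σ}
    (hF : pderiv j F = 0) (hm : m j ≠ 0) : mderiv m F = 0 := by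
  rw [← tsub_add_cancel_of_le (Finsupp.single_le_iff.mpr (Nat.one_le_iff_ne_zero.mpr hm)),
    ← mderiv_mderiv, mderiv_single_one, hF, mderiv_zero_right]

theorem mderiv_single_X_pow_mul {j : σ} {G : MvPolynomial σ ℂ} (hG : pderiv j G = 0) (b : ℕ) :
    mderiv (Finsupp.single j b) (X j ^ b * G) = (b.factorial : ℂ) • G := by
  induction b with
  | zero => simp [mderiv_zero_left]
  | succ b ih =>
    have hpderiv : pderiv j (X j ^ (b + 1) * G) = ((b + 1 : ℕ) : ℂ) • (X j ^ b * G) := by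
      rw [Derivation.leibniz, hG, smul_zero, zero_add, pderiv_pow, pderiv_X_self, smul_eq_mul,
        smul_eq_C_mul, map_natCast, Nat.add_sub_cancel]
      ring
    rw [show Finsupp.single j (b + 1) = Finsupp.single j b + Finsupp.single j 1 from
      Finsupp.single_add j b 1, ← mderiv_mderiv, mderiv_single_one, hpderiv, mderiv_smul,
      ih, smul_smul, Nat.factorial_succ, Nat.cast_mul]

theorem mderiv_eq_zero_of_isHomogeneous {G : MvPolynomial σ ℂ} {e : ℕ} (hG : G.IsHomogeneous e)
    {m : σ →₀ ℕ} (hm : e < m.degree) : mderiv m G = 0 := by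
  ext n
  rw [coeff_mderiv, coeff_zero, hG.coeff_eq_zero (by rw [map_add]; omega), mul_zero]

theorem mderiv_rename {τ : Type*} {f : σ → τ} (hf : Function.Injective f) (m : σ →₀ ℕ)
    (G : MvPolynomial σ ℂ) :
    mderiv (Finsupp.mapDomain f m) (rename f G) = rename f (mderiv m G) := by
  classical
  induction G using MvPolynomial.induction_on' with
  | monomial k c =>
    rw [rename_monomial, mderiv_monomial, mderiv_monomial, rename_monomial,
      Finsupp.mapDomain_tsub hf, Finsupp.mapDomain_support_of_injective hf, Finset.prod_image
        hf.injOn]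
    simp only [Finsupp.mapDomain_apply hf]
  | add p q hp hq => rw [map_add, mderiv_add, hp, hq, mderiv_add, map_add]

theorem pderiv_rename_eq_zero {τ : Type*} {f : σ → τ} {j : τ} (hj : j ∉ Set.range f)
    (G : MvPolynomial σ ℂ) : pderiv j (rename f G) = 0 :=
  pderiv_eq_zero_of_notMem_vars fun h => by
    obtain ⟨i, -, hi⟩ := mem_vars_rename f G h
    exact hj ⟨i, hi⟩

end Calculus

section DiffOp

variable {σ : Type*}

theorem diffOp_eq_sum (Θ F : MvPolynomial σ ℂ) :
    diffOp Θ F = ∑ m ∈ Θ.support, coeff m Θ • mderiv m F := rfl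

theorem diffOp_monomial (m : σ →₀ ℕ) (c : ℂ) (F : MvPolynomial σ ℂ) :
    diffOp (monomial m c) F = c • mderiv m F :=
  MvPolynomial.sum_monomial_eq (zero_smul _ _)

theorem diffOp_zero_left (F : MvPolynomial σ ℂ) : diffOp 0 F = 0 := rfl

theorem diffOp_add_left (Θ₁ Θ₂ F : MvPolynomial σ ℂ) :
    diffOp (Θ₁ + Θ₂) F = diffOp Θ₁ F + diffOp Θ₂ F :=
  Finsupp.sum_add_index' (fun _ => zero_smul _ _) (fun _ _ _ => add_smul _ _ _)

theorem diffOp_sum_left {ι : Type*} (s : Finset ι) (Θ : ι → MvPolynomial σ ℂ)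
    (F : MvPolynomial σ ℂ) : diffOp (∑ i ∈ s, Θ i) F = ∑ i ∈ s, diffOp (Θ i) F := by
  induction s using Finset.cons_induction with
  | empty => exact diffOp_zero_left F
  | cons i s hi ih => rw [Finset.sum_cons, Finset.sum_cons, diffOp_add_left, ih]

theorem diffOp_add_right (Θ F G : MvPolynomial σ ℂ) :
    diffOp Θ (F + G) = diffOp Θ F + diffOp Θ G := by
  simp only [diffOp_eq_sum, mderiv_add, smul_add, Finset.sum_add_distrib]

theorem diffOp_smul_right (Θ : MvPolynomial σ ℂ) (t : ℂ) (F : MvPolynomial σ ℂ) :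
    diffOp Θ (t • F) = t • diffOp Θ F := by
  simp only [diffOp_eq_sum, mderiv_smul, smul_comm _ t, Finset.smul_sum]

theorem diffOp_zero_right (Θ : MvPolynomial σ ℂ) : diffOp Θ 0 = 0 := by
  simpa using diffOp_smul_right Θ 0 0

theorem diffOp_sum_right {ι : Type*} (Θ : MvPolynomial σ ℂ) (s : Finset ι)
    (F : ι → MvPolynomial σ ℂ) : diffOp Θ (∑ i ∈ s, F i) = ∑ i ∈ s, diffOp Θ (F i) := by
  induction s using Finset.cons_induction with
  | empty => exact diffOp_zero_right Θ
  | cons i s hi ih => rw [Finset.sum_cons, Finset.sum_cons, diffOp_add_right, ih]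

theorem diffOp_mul (Θ₁ Θ₂ F : MvPolynomial σ ℂ) :
    diffOp (Θ₁ * Θ₂) F = diffOp Θ₁ (diffOp Θ₂ F) := by
  induction Θ₁ using MvPolynomial.induction_on' with
  | add p q hp hq => rw [add_mul, diffOp_add_left, hp, hq, diffOp_add_left]
  | monomial m c =>
    induction Θ₂ using MvPolynomial.induction_on' with
    | add p q hp hq => rw [mul_add, diffOp_add_left, hp, hq, diffOp_add_left, diffOp_add_right]
    | monomial m' c' =>
      simp [monomial_mul, diffOp_monomial, mderiv_smul, mderiv_mderiv, smul_smul]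

theorem diffOp_X_pow (j : σ) (n : ℕ) (F : MvPolynomial σ ℂ) :
    diffOp (X j ^ n) F = mderiv (Finsupp.single j n) F := by
  rw [X_pow_eq_monomial, diffOp_monomial, one_smul]

theorem diffOp_X (j : σ) (F : MvPolynomial σ ℂ) : diffOp (X j) F = pderiv j F := by
  rw [← pow_one (X j), diffOp_X_pow, mderiv_single_one]

theorem diffOp_X_pow_mul_add {j : σ} {a : ℕ} (ha : 1 ≤ a) {H K : MvPolynomial σ ℂ}
    (hHj : pderiv j H = 0) (hKj : pderiv j K = 0) (Ψ : MvPolynomial σ ℂ) :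
    diffOp (X j ^ a * Ψ) (X j ^ a * H + K) = (a.factorial : ℂ) • diffOp Ψ H := by
  rw [mul_comm, diffOp_mul, diffOp_X_pow, mderiv_add, mderiv_single_X_pow_mul hHj,
    mderiv_eq_zero_of_pderiv_eq_zero hKj (by simpa using (by omega : a ≠ 0)), add_zero,
    diffOp_smul_right]

theorem diffOp_X_mul_eq_zero {j : σ} {H : MvPolynomial σ ℂ} (hHj : pderiv j H = 0)
    (Ψ : MvPolynomial σ ℂ) : diffOp (X j * Ψ) H = 0 := by
  rw [mul_comm, diffOp_mul, diffOp_X, hHj, diffOp_zero_right]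

theorem diffOp_eq_zero_of_isHomogeneous {G Θ : MvPolynomial σ ℂ} {e k : ℕ}
    (hG : G.IsHomogeneous e) (hΘ : Θ.IsHomogeneous k) (h : e < k) : diffOp Θ G = 0 := by
  rw [diffOp_eq_sum]
  refine Finset.sum_eq_zero fun m hm => ?_
  rw [mderiv_eq_zero_of_isHomogeneous hG (hΘ.degree_eq_of_mem_support hm ▸ h), smul_zero]

section Rename

variable {τ : Type*} {f : σ → τ}

theorem diffOp_rename (hf : Function.Injective f) (Θ G : MvPolynomial σ ℂ) :
    diffOp (rename f Θ) (rename f G) = rename f (diffOp Θ G) := by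
  induction Θ using MvPolynomial.induction_on' with
  | add p q hp hq => rw [map_add, diffOp_add_left, hp, hq, diffOp_add_left, map_add]
  | monomial m c =>
    rw [rename_monomial, diffOp_monomial, diffOp_monomial, map_smul, mderiv_rename hf]

theorem mderiv_rename_mem_map (hf : Function.Injective f) (m : τ →₀ ℕ) (G : MvPolynomial σ ℂ) :
    mderiv m (rename f G) ∈ (Submodule.span ℂ (Set.range fun Θ => diffOp Θ G)).map
      (rename f : MvPolynomial σ ℂ →ₐ[ℂ] MvPolynomial τ ℂ).toLinearMap := by
  by_cases hm : ↑m.support ⊆ Set.range f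
  · rw [← Finsupp.mapDomain_comapDomain f hf m hm, mderiv_rename hf]
    refine Submodule.mem_map_of_mem
      (Submodule.subset_span ⟨monomial (m.comapDomain f hf.injOn) 1, ?_⟩)
    exact (diffOp_monomial _ _ G).trans (one_smul _ _)
  · obtain ⟨x, hxm, hxf⟩ := Set.not_subset.mp hm
    rw [mderiv_eq_zero_of_pderiv_eq_zero (pderiv_rename_eq_zero hxf G)
      (Finsupp.mem_support_iff.mp hxm)]
    exact Submodule.zero_mem _

theorem apolarLength_rename (hf : Function.Injective f) (G : MvPolynomial σ ℂ) :
    apolarLength (rename f G) = apolarLength G := by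
  set ren := (rename f : MvPolynomial σ ℂ →ₐ[ℂ] MvPolynomial τ ℂ).toLinearMap
  have hspan : Submodule.span ℂ (Set.range fun Θ => diffOp Θ (rename f G)) =
      (Submodule.span ℂ (Set.range fun Θ => diffOp Θ G)).map ren := by
    refine le_antisymm (Submodule.span_le.mpr ?_) ?_
    · rintro _ ⟨Θ, rfl⟩
      exact Submodule.sum_mem _ fun m _ =>
        Submodule.smul_mem _ _ (mderiv_rename_mem_map hf m G)
    · rw [Submodule.map_span, Submodule.span_le]
      rintro _ ⟨_, ⟨Θ, rfl⟩, rfl⟩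
      exact Submodule.subset_span ⟨rename f Θ, diffOp_rename hf Θ G⟩
  rw [apolarLength, apolarLength, hspan]
  exact LinearEquiv.finrank_eq
    (Submodule.equivMapOfInjective ren (rename_injective f hf) _).symm

end Rename

end DiffOp

section LinearForms

variable {σ : Type*} [Fintype σ]

noncomputable def linForm (v : σ → ℂ) : MvPolynomial σ ℂ := ∑ j, v j • X j

theorem pderiv_linForm (v : σ → ℂ) (j : σ) : pderiv j (linForm v) = C (v j) := by
  classical
  simp [linForm, smul_eq_C_mul, pderiv_X, Pi.single_apply]

theorem isHomogeneous_linForm_pow (v : σ → ℂ) (d : ℕ) : (linForm v ^ d).IsHomogeneous d := by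
  have h : (linForm v).IsHomogeneous 1 :=
    IsHomogeneous.sum _ _ _ fun j _ => by
      simpa [smul_eq_C_mul] using isHomogeneous_C_mul_X (v j) j
  simpa using h.pow d

theorem mderiv_linForm_pow (v : σ → ℂ) (m : σ →₀ ℕ) (d : ℕ) :
    mderiv m (linForm v ^ d) =
      ((d.descFactorial m.degree : ℂ) * m.prod fun i k => v i ^ k) •
        linForm v ^ (d - m.degree) := by
  obtain ⟨N, hN⟩ : ∃ N, m.degree = N := ⟨_, rfl⟩
  induction N generalizing m d with
  | zero =>
    obtain rfl := (Finsupp.degree_eq_zero_iff m).mp hN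
    simp [mderiv_zero_left]
  | succ N ih =>
    obtain ⟨j, hj⟩ : ∃ j, m j ≠ 0 := by
      by_contra! h
      simp [(Finsupp.degree_eq_zero_iff m).mpr (Finsupp.ext h)] at hN
    set m' := m - Finsupp.single j 1
    have hm : m = m' + Finsupp.single j 1 :=
      (tsub_add_cancel_of_le (Finsupp.single_le_iff.mpr (Nat.one_le_iff_ne_zero.mpr hj))).symm
    have hm' : m'.degree = N := by
      rw [hm, map_add, Finsupp.degree_single] at hN
      omega
    have hprod : (m.prod fun i k => v i ^ k) = (m'.prod fun i k => v i ^ k) * v j := by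
      rw [hm, Finsupp.prod_add_index' (fun _ => pow_zero _) (fun _ _ _ => pow_add _ _ _),
        Finsupp.prod_single_index (h := fun i k => v i ^ k) (pow_zero (v j)), pow_one]
    rw [hm, ← mderiv_mderiv, mderiv_single_one, pderiv_pow, pderiv_linForm,
      show (d : MvPolynomial σ ℂ) * linForm v ^ (d - 1) * C (v j) =
        ((d : ℂ) * v j) • linForm v ^ (d - 1) by
          rw [smul_eq_C_mul, map_mul, map_natCast]; ring,
      mderiv_smul, ih m' (d - 1) hm', smul_smul, ← hm, hN, hprod]
    cases d with
    | zero => simp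
    | succ d =>
      rw [Nat.succ_descFactorial_succ, Nat.add_sub_cancel, hm', Nat.add_sub_add_right]
      push_cast
      ring_nf

theorem diffOp_linForm_pow {Ψ : MvPolynomial σ ℂ} {s : ℕ} (hΨ : Ψ.IsHomogeneous s)
    (v : σ → ℂ) (d : ℕ) :
    diffOp Ψ (linForm v ^ d) = ((d.descFactorial s : ℂ) * eval v Ψ) • linForm v ^ (d - s) := by
  rw [diffOp_eq_sum, eval_eq, Finset.mul_sum, Finset.sum_smul]
  refine Finset.sum_congr rfl fun m hm => ?_
  rw [mderiv_linForm_pow, hΨ.degree_eq_of_mem_support hm, smul_smul]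
  congr 1
  rw [Finsupp.prod]
  ring

theorem coeff_linForm_pow (v : σ → ℂ) (u : σ →₀ ℕ) :
    (u.prod fun _ k => (k.factorial : ℂ)) * coeff u (linForm v ^ u.degree) =
      u.degree.factorial * u.prod fun i k => v i ^ k := by
  have h := congr_arg (coeff 0) (mderiv_linForm_pow v u u.degree)
  rw [coeff_mderiv, zero_add, Nat.descFactorial_self, Nat.sub_self, pow_zero, coeff_smul,
    coeff_zero_one, smul_eq_mul, mul_one] at h
  rw [← h, Finsupp.prod]
  simp only [Nat.descFactorial_self]

end LinearForms

section Span

variable {σ : Type*} [Fintype σ]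

theorem mem_finsuppAntidiag_univ [DecidableEq σ] {d : ℕ} {u : σ →₀ ℕ} :
    u ∈ Finset.finsuppAntidiag Finset.univ d ↔ u.degree = d := by
  simp [Finset.mem_finsuppAntidiag, Finsupp.degree_eq_sum]

theorem MvPolynomial.IsHomogeneous.map_eq_sum [DecidableEq σ] {R M : Type*} [CommSemiring R]
    [AddCommMonoid M] [Module R M] (f : MvPolynomial σ R →ₗ[R] M) {φ : MvPolynomial σ R}
    {d : ℕ} (hφ : φ.IsHomogeneous d) :
    f φ = ∑ u ∈ Finset.finsuppAntidiag Finset.univ d, coeff u φ • f (monomial u 1) := by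
  conv_lhs => rw [φ.as_sum]
  rw [map_sum]
  refine Finset.sum_subset (fun u hu => mem_finsuppAntidiag_univ.mpr
    (hφ.degree_eq_of_mem_support hu)) (fun u _ hu => ?_) |>.trans
      (Finset.sum_congr rfl fun u _ => ?_)
  · rw [MvPolynomial.notMem_support_iff.mp hu, monomial_zero, map_zero]
  · rw [← map_smul, smul_monomial, smul_eq_mul, mul_one]

/-- A functional vanishing on all `linForm v ^ d` yields a polynomial in `v` that vanishes
identically and whose coefficients are, up to multinomial factors, the values of the functional
on the monomials of degree `d`. -/
theorem MvPolynomial.IsHomogeneous.mem_span_linForm_pow {G : MvPolynomial σ ℂ} {d : ℕ}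
    (hG : G.IsHomogeneous d) : G ∈ Submodule.span ℂ (Set.range fun v => linForm v ^ d) := by
  classical
  by_contra hG'
  obtain ⟨f, hfG, hf⟩ := Submodule.exists_dual_map_eq_bot_of_notMem hG' inferInstance
  have hf_pow : ∀ v, f (linForm v ^ d) = 0 := fun v => by
    have hv : linForm v ^ d ∈ Submodule.span ℂ (Set.range fun v => linForm v ^ d) :=
      Submodule.subset_span ⟨v, rfl⟩
    simpa [hf] using Submodule.mem_map_of_mem (f := f) hv
  set T := Finset.finsuppAntidiag (Finset.univ : Finset σ) d
  set fact : (σ →₀ ℕ) → ℂ := fun u => u.prod fun _ k => (k.factorial : ℂ)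
  have hfact : ∀ u, fact u ≠ 0 := fun u =>
    Finset.prod_ne_zero_iff.mpr fun _ _ => Nat.cast_ne_zero.mpr (Nat.factorial_ne_zero _)
  set Q : MvPolynomial σ ℂ := ∑ u ∈ T, monomial u (f (monomial u 1) / fact u)
  have hQ : Q = 0 := MvPolynomial.funext fun v => by
    have h : (d.factorial : ℂ) * eval v Q = 0 := by
      rw [← hf_pow v, (isHomogeneous_linForm_pow v d).map_eq_sum f, map_sum, Finset.mul_sum]
      refine Finset.sum_congr rfl fun u hu => ?_
      have hc : coeff u (linForm v ^ d) = d.factorial * (u.prod fun i k => v i ^ k) / fact u := by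
        rw [eq_div_iff (hfact u), mul_comm, ← mem_finsuppAntidiag_univ.mp hu]
        exact coeff_linForm_pow v u
      rw [eval_monomial, hc]
      ring
    simpa [Nat.factorial_ne_zero] using h
  have hf_monomial : ∀ u ∈ T, f (monomial u 1) = 0 := fun u hu => by
    have h := congr_arg (coeff u) hQ
    rw [coeff_sum, Finset.sum_eq_single_of_mem u hu fun w _ hw => by rw [coeff_monomial,
      if_neg hw], coeff_monomial, if_pos rfl, coeff_zero, div_eq_zero_iff] at h
    exact h.resolve_right (hfact u)
  refine hfG ((hG.map_eq_sum f).trans (Finset.sum_eq_zero fun u hu => ?_))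
  rw [hf_monomial u hu, smul_zero]

end Span

section Waring

variable {σ : Type*} [Fintype σ]

theorem exists_eq_sum_linForm_pow_waringRank {F : MvPolynomial σ ℂ} {d : ℕ}
    (hF : F.IsHomogeneous d) :
    ∃ (c : Fin (waringRank d F) → ℂ) (v : Fin (waringRank d F) → σ → ℂ),
      F = ∑ i, c i • linForm (v i) ^ d := by
  show waringRank d F ∈ {r : ℕ | ∃ (c : Fin r → ℂ) (v : Fin r → σ → ℂ),
    F = ∑ i, c i • linForm (v i) ^ d}
  apply Nat.sInf_mem
  obtain ⟨n, c, g, hg⟩ := Submodule.mem_span_set'.mp hF.mem_span_linForm_pow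
  choose v hv using fun i => (g i).2
  exact ⟨n, c, v, by simp only [← hg, hv]⟩

theorem linForm_smul (t : ℂ) (v : σ → ℂ) : linForm (t • v) = t • linForm v := by
  simp [linForm, Finset.smul_sum, smul_smul]

theorem exists_sum_linForm_pow_eq_normalized_add {ι : Type*} [Fintype ι] (j : σ) (c : ι → ℂ)
    (v : ι → σ → ℂ) (d : ℕ) :
    ∃ (c' : ι → ℂ) (w : ι → σ → ℂ) (G : MvPolynomial σ ℂ), (∀ i, w i j = 1) ∧
      pderiv j G = 0 ∧ ∑ i, c i • linForm (v i) ^ d = ∑ i, c' i • linForm (w i) ^ d + G := by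
  classical
  refine ⟨fun i => if v i j = 0 then 0 else c i * v i j ^ d,
    fun i => if v i j = 0 then Pi.single j 1 else (v i j)⁻¹ • v i,
    ∑ i, if v i j = 0 then c i • linForm (v i) ^ d else 0, fun i => ?_, ?_, ?_⟩
  · dsimp only
    split_ifs with h
    · simp
    · simp [h]
  · refine (map_sum _ _ _).trans (Finset.sum_eq_zero fun i _ => ?_)
    split_ifs with h
    · simp [pderiv_linForm, h]
    · exact map_zero _
  · rw [← Finset.sum_add_distrib]
    refine Finset.sum_congr rfl fun i _ => ?_
    dsimp only
    split_ifs with h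
    · simp
    · conv_lhs => rw [← smul_inv_smul₀ h (v i), linForm_smul]
      rw [smul_pow, smul_smul, add_zero]

end Waring

section Filtration

variable {K V W : Type*} [Field K] [AddCommGroup V] [Module K V] [FiniteDimensional K V]
  [AddCommGroup W] [Module K W]

theorem finrank_map_add_finrank_le_of_le_ker {A B : Submodule K V} (T : V →ₗ[K] W)
    (hAB : A ≤ B) (hA : A ≤ LinearMap.ker T) :
    finrank K (B.map T) + finrank K A ≤ finrank K B := by
  have h := LinearMap.finrank_range_add_finrank_ker (T.domRestrict B)
  rw [LinearMap.range_domRestrict] at h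
  have hker : finrank K A ≤ finrank K (LinearMap.ker (T.domRestrict B)) := by
    rw [← (Submodule.comapSubtypeEquivOfLe hAB).finrank_eq]
    exact Submodule.finrank_mono fun x hx => hA hx
  omega

/-- Each `T k (E k)` is a quotient of `E k / E (k - 1)`, so the dimensions telescope. -/
theorem finrank_finsetSup_map_le (E : ℕ → Submodule K V) (T : ℕ → V →ₗ[K] W) (N : ℕ)
    (hmono : ∀ k < N, E k ≤ E (k + 1)) (hker : ∀ k < N, E k ≤ LinearMap.ker (T (k + 1))) :
    finrank K ((Finset.range (N + 1)).sup fun k => (E k).map (T k) : Submodule K W) ≤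
      finrank K (E N) := by
  induction N with
  | zero =>
    rw [Finset.range_one, Finset.sup_singleton]
    exact Submodule.finrank_map_le (T 0) (E 0)
  | succ N ih =>
    rw [Finset.range_add_one, Finset.sup_insert]
    have hstep := finrank_map_add_finrank_le_of_le_ker (T (N + 1)) (hmono N N.lt_add_one)
      (hker N N.lt_add_one)
    have hprev := ih (fun k hk => hmono k (by omega)) (fun k hk => hker k (by omega))
    have hsup := Submodule.finrank_add_le_finrank_add_finrank ((E (N + 1)).map (T (N + 1)))
      ((Finset.range (N + 1)).sup fun k => (E k).map (T k))
    omega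

end Filtration

section Main

variable {σ ι : Type*}

noncomputable def scaledEval (c : ι → ℂ) (w : ι → σ → ℂ) : MvPolynomial σ ℂ →ₗ[ℂ] ι → ℂ :=
  LinearMap.pi fun i => c i • (aeval (w i)).toLinearMap

theorem scaledEval_apply (c : ι → ℂ) (w : ι → σ → ℂ) (Ψ : MvPolynomial σ ℂ) (i : ι) :
    scaledEval c w Ψ i = c i * eval (w i) Ψ := by
  simp [scaledEval]

theorem scaledEval_X_pow_mul {c : ι → ℂ} {w : ι → σ → ℂ} {j : σ} (hw : ∀ i, w i j = 1) (n : ℕ)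
    (Ψ : MvPolynomial σ ℂ) : scaledEval c w (X j ^ n * Ψ) = scaledEval c w Ψ := by
  ext i
  simp [scaledEval_apply, hw]

theorem diffOp_sum_linForm_pow [Fintype σ] [Fintype ι] {Ψ : MvPolynomial σ ℂ} {s : ℕ}
    (hΨ : Ψ.IsHomogeneous s) (c : ι → ℂ) (w : ι → σ → ℂ) (d : ℕ) :
    diffOp Ψ (∑ i, c i • linForm (w i) ^ d) = (d.descFactorial s : ℂ) •
      Fintype.linearCombination ℂ (fun i => linForm (w i) ^ (d - s)) (scaledEval c w Ψ) := by
  simp only [diffOp_sum_right, diffOp_smul_right, diffOp_linForm_pow hΨ,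
    Fintype.linearCombination_apply, scaledEval_apply, Finset.smul_sum, smul_smul]
  exact Finset.sum_congr rfl fun i _ => by ring_nf

theorem apolarLength_le_card_of_normalized [Fintype σ] [Fintype ι] {j : σ} {a e : ℕ} (ha : 1 ≤ a)
    {H K : MvPolynomial σ ℂ} (hH : H.IsHomogeneous e) (hHj : pderiv j H = 0)
    (hKj : pderiv j K = 0) (c : ι → ℂ) (w : ι → σ → ℂ) (hw : ∀ i, w i j = 1)
    (hF : X j ^ a * H + K = ∑ i, c i • linForm (w i) ^ (a + e)) :
    apolarLength H ≤ Fintype.card ι := by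
  set E : ℕ → Submodule ℂ (ι → ℂ) := fun k => (homogeneousSubmodule σ ℂ k).map (scaledEval c w)
  set T : ℕ → (ι → ℂ) →ₗ[ℂ] MvPolynomial σ ℂ :=
    fun k => Fintype.linearCombination ℂ fun i => linForm (w i) ^ (e - k)
  have hfact : (a.factorial : ℂ) ≠ 0 := Nat.cast_ne_zero.mpr a.factorial_ne_zero
  have key : ∀ k (Ψ : MvPolynomial σ ℂ), Ψ.IsHomogeneous k →
      (a.factorial : ℂ) • diffOp Ψ H =
        ((a + e).descFactorial (a + k) : ℂ) • T k (scaledEval c w Ψ) := fun k Ψ hΨ => by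
    rw [← diffOp_X_pow_mul_add ha hHj hKj, hF,
      diffOp_sum_linForm_pow ((isHomogeneous_X_pow j a).mul hΨ), scaledEval_X_pow_mul hw,
      Nat.add_sub_add_left]
  have hmem : ∀ k ≤ e, ∀ Ψ ∈ homogeneousSubmodule σ ℂ k, diffOp Ψ H ∈ (E k).map (T k) := by
    intro k _ Ψ hΨ
    rw [← inv_smul_smul₀ hfact (diffOp Ψ H), key k Ψ hΨ, smul_smul]
    exact Submodule.smul_mem _ _ (Submodule.mem_map_of_mem (Submodule.mem_map_of_mem hΨ))
  have hmono : ∀ k < e, E k ≤ E (k + 1) := by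
    rintro k - _ ⟨Ψ, hΨ, rfl⟩
    refine ⟨X j ^ 1 * Ψ, ?_, scaledEval_X_pow_mul hw 1 Ψ⟩
    simpa [add_comm] using (isHomogeneous_X_pow j 1).mul hΨ
  have hker : ∀ k < e, E k ≤ LinearMap.ker (T (k + 1)) := by
    rintro k hk _ ⟨Ψ, hΨ, rfl⟩
    have h := key (k + 1) (X j * Ψ) (by simpa [add_comm] using (isHomogeneous_X ℂ j).mul hΨ)
    rw [diffOp_X_mul_eq_zero hHj, smul_zero, ← pow_one (X j), scaledEval_X_pow_mul hw] at h
    refine (smul_eq_zero.mp h.symm).resolve_left ?_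
    exact Nat.cast_ne_zero.mpr (Nat.descFactorial_eq_zero_iff_lt.not.mpr (by omega))
  have hspan : Submodule.span ℂ (Set.range fun Θ => diffOp Θ H) ≤
      (Finset.range (e + 1)).sup fun k => (E k).map (T k) := by
    rw [Submodule.span_le]
    rintro _ ⟨Θ, rfl⟩
    show diffOp Θ H ∈ _
    rw [← sum_homogeneousComponent Θ, diffOp_sum_left]
    refine Submodule.sum_mem _ fun k _ => ?_
    by_cases hk : k ≤ e
    · exact Finset.le_sup (f := fun k => (E k).map (T k)) (Finset.mem_range.mpr (by omega))
        (hmem k hk _ (homogeneousComponent_mem k Θ))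
    · rw [diffOp_eq_zero_of_isHomogeneous hH (homogeneousComponent_isHomogeneous k Θ)
        (by omega)]
      exact Submodule.zero_mem _
  calc apolarLength H ≤ finrank ℂ ((Finset.range (e + 1)).sup fun k => (E k).map (T k) :
        Submodule ℂ (MvPolynomial σ ℂ)) := Submodule.finrank_mono hspan
    _ ≤ finrank ℂ (E e) := finrank_finsetSup_map_le E T e hmono hker
    _ ≤ Fintype.card ι := (Submodule.finrank_le _).trans (finrank_fintype_fun_eq_card ℂ).le

end Main

theorem apolarLength_le_card_of_eq_sum_linForm_pow {σ ι : Type*} [Fintype σ] [Fintype ι]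
    {j : σ} {a e : ℕ} (ha : 1 ≤ a) {H K : MvPolynomial σ ℂ} (hH : H.IsHomogeneous e)
    (hHj : pderiv j H = 0) (hKj : pderiv j K = 0) (c : ι → ℂ) (v : ι → σ → ℂ)
    (hF : X j ^ a * H + K = ∑ i, c i • linForm (v i) ^ (a + e)) :
    apolarLength H ≤ Fintype.card ι := by
  obtain ⟨c', w, G, hw, hGj, hsum⟩ := exists_sum_linForm_pow_eq_normalized_add j c v (a + e)
  refine apolarLength_le_card_of_normalized ha hH hHj (K := K - G)
    (by rw [map_sub, hKj, hGj, sub_zero]) c' w hw ?_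
  rw [← add_sub_assoc, hF, hsum, add_sub_cancel_right]

theorem stmt9_general (p d a : ℕ) (ha : 1 ≤ a) (had : a ≤ d)
    (H : MvPolynomial (Fin p) ℂ) (hHd : H.IsHomogeneous (d - a))
    (K : MvPolynomial (Fin p) ℂ) (hK : K.IsHomogeneous d)
    (F : MvPolynomial (Fin (p + 1)) ℂ)
    (hF : F = X 0 ^ a * rename Fin.succ H + rename Fin.succ K) :
    apolarLength H ≤ waringRank d F := by
  have hFd : F.IsHomogeneous d := by
    have hXH := (isHomogeneous_X_pow (R := ℂ) 0 a).mul (hHd.rename_isHomogeneous (f := Fin.succ))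
    rw [Nat.add_sub_cancel' had] at hXH
    exact hF ▸ hXH.add hK.rename_isHomogeneous
  obtain ⟨c, v, hFcv⟩ := exists_eq_sum_linForm_pow_waringRank hFd
  have h0 : (0 : Fin (p + 1)) ∉ Set.range Fin.succ := fun ⟨i, hi⟩ => Fin.succ_ne_zero i hi
  rw [← apolarLength_rename (Fin.succ_injective p)]
  simpa using apolarLength_le_card_of_eq_sum_linForm_pow ha hHd.rename_isHomogeneous
    (pderiv_rename_eq_zero h0 H) (pderiv_rename_eq_zero h0 K) c v
    (by rw [Nat.add_sub_cancel' had, ← hF]; exact hFcv)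

/-- For `F = x^a·H(y) + K(y)` with `H` nonzero homogeneous of degree `d − a` and `K`
homogeneous of degree `d` in the `y`-variables only: if `F ≠ 0` then `r(F) ≥ al(H)`. -/
theorem stmt9 (p d a : ℕ) (ha : 1 ≤ a) (had : a ≤ d)
    (H : MvPolynomial (Fin p) ℂ) (hH : H ≠ 0) (hHd : H.IsHomogeneous (d - a))
    (K : MvPolynomial (Fin p) ℂ) (hK : K.IsHomogeneous d)
    (F : MvPolynomial (Fin (p + 1)) ℂ)
    (hF : F = X 0 ^ a * rename Fin.succ H + rename Fin.succ K)
    (hF0 : F ≠ 0) :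
    apolarLength H ≤ waringRank d F :=
  stmt9_general p d a ha had H hHd K hK F hF
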